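/- The first zero θ_Δ is a nonincreasing function of Δ ∈ [0,∞). More precisely: θ_0 = π/2, θ_Δ = √2 for every Δ ≥ √2, and Δ ↦ θ_Δ is strictly decreasing on [0, √2] (from π/2 to √2). -/

import Mathlib

/-! Write `r' = -P` with `P t = ∫₀ᵗ r(u - Δ) du`. Since `0 ≤ r ≤ 1` up to `θ_Δ`, `0 ≤ P t ≤ t`, whence
`r t ≥ 1 - t²/2` and `θ_Δ ≥ √2`; on `[0, Δ]` one has `P t = t`, so `r t = 1 - t²/2` and `θ_Δ = √2`
once `Δ ≥ √2`; and `r_0 = cos`.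

For `0 ≤ Δ₁ < Δ₂ ≤ √2` consider the Wronskian `W = r₂' r₁ - r₁' r₂`, with
`W' = r₁(t - Δ₁) r₂(t) - r₂(t - Δ₂) r₁(t)`. It vanishes at `0` and `W' ≤ 0` on `[0, Δ₂]`, strictly
after `Δ₁`, so `W(Δ₂) < 0`. Afterwards, as long as `W ≤ 0`, the quotient `r₂ / r₁` (whose derivative is
`W / r₁²`) decreases, so `r₂(t) r₁(t - Δ₂) ≤ r₂(t - Δ₂) r₁(t)`; with `r₁(t - Δ₁) ≤ r₁(t - Δ₂)` this gives
`W' ≤ 0`. Hence `W < 0` up to `θ₁`, whereas `θ₁ ≤ θ₂` would give `W(θ₁) = -r₁'(θ₁) r₂(θ₁) ≥ 0`. -/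

open MeasureTheory Set Filter

/-- `x` solves the delay equation `x''(t) + p(t)·x(t − τ(t)) = 0` on `I` in the
Carathéodory sense: `x` is differentiable on `I` and on `I` its derivative is an
indefinite integral of `-p(u)·x(u − τ(u))` (so `x` and its derivative are locally
absolutely continuous there, and the equation holds for a.e. `t ∈ I`). -/
def SolvesDDE (p τ x : ℝ → ℝ) (I : Set ℝ) : Prop :=
  (∀ t ∈ I, HasDerivAt x (deriv x t) t) ∧
  (∀ t₀ ∈ I, ∀ t ∈ I, deriv x t = deriv x t₀ - ∫ u in t₀..t, p u * x (u - τ u))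

/-- `r` is the solution `r_Δ` of `r''(t) + r(t − Δ) = 0`, `t ≥ 0`, with `r ≡ 1` on
`(-∞,0]` and `r'(0) = 0` (the derivative is an indefinite integral of `-r(· - Δ)`). -/
def IsDelayCosine (Δ : ℝ) (r : ℝ → ℝ) : Prop :=
  (∀ t ≤ (0:ℝ), r t = 1) ∧
  (∀ t, 0 ≤ t → HasDerivAt r (deriv r t) t) ∧
  (∀ t, 0 ≤ t → deriv r t = - ∫ u in (0:ℝ)..t, r (u - Δ))

/-- `θ` is the first zero of `r` on `[0,∞)`. -/
def IsFirstZero (r : ℝ → ℝ) (θ : ℝ) : Prop :=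
  0 < θ ∧ r θ = 0 ∧ ∀ t, 0 ≤ t → t < θ → 0 < r t

/-- `g(w) = ρ·r(θ − w − Δ)·χ_{[−Δ,0]}(w)`. -/
noncomputable def gAux (ρ Δ θ : ℝ) (r : ℝ → ℝ) : ℝ → ℝ :=
  (Set.Icc (-Δ) (0:ℝ)).indicator fun w => ρ * r (θ - w - Δ)

/-- The double integral `∫_{-c}^0 (∫_{-c}^s max (β w) (g w) dw) ds`. -/
noncomputable def doubleInt (g β : ℝ → ℝ) (c : ℝ) : ℝ :=
  ∫ s in (-c)..(0:ℝ), ∫ w in (-c)..s, max (β w) (g w)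

/-- The recursively defined sequences `β_n`, `ϖ_n` associated with `g`. -/
def IsBetaSeq (g : ℝ → ℝ) (β : ℕ → ℝ → ℝ) (ϖ : ℕ → ℝ) : Prop :=
  (∀ t ≤ (0:ℝ), β 0 t = 1) ∧
  ∀ n : ℕ,
    (0 < ϖ n ∧ doubleInt g (β n) (ϖ n) = 1) ∧
    (∀ t, t ≤ -ϖ n → β (n+1) t = 1) ∧
    (∀ t, -ϖ n ≤ t → t ≤ 0 →
      β (n+1) t = 1 - ∫ s in (-ϖ n)..t, ∫ w in (-ϖ n)..s, max (β n w) (g w))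

/-- `x` has a locally absolutely continuous derivative on `[a,b]`, with a.e. second
derivative `w`. -/
def HasSecondDerivAEOn (x w : ℝ → ℝ) (a b : ℝ) : Prop :=
  (∀ t ∈ Set.Icc a b, HasDerivAt x (deriv x t) t) ∧
  (∀ t ∈ Set.Icc a b, deriv x t = deriv x a + ∫ u in a..t, w u)

open Real

theorem ContinuousOn.forall_neg_of_forall_Ico_neg {f : ℝ → ℝ} {a b : ℝ}
    (hf : ContinuousOn f (Icc a b))
    (step : ∀ s ∈ Icc a b, (∀ x ∈ Ico a s, f x < 0) → f s < 0) :
    ∀ x ∈ Icc a b, f x < 0 := by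
  by_contra! hex
  obtain ⟨x, hx, hfx⟩ := hex
  set S := Icc a b ∩ f ⁻¹' Ici 0
  have hS : IsClosed S := hf.preimage_isClosed_of_isClosed isClosed_Icc isClosed_Ici
  have hbdd : BddBelow S := ⟨a, fun y hy => hy.1.1⟩
  have hc : sInf S ∈ S := hS.csInf_mem ⟨x, hx, hfx⟩ hbdd
  refine (step _ hc.1 fun y hy => ?_).not_ge hc.2
  by_contra! hy0
  exact (csInf_le hbdd ⟨⟨hy.1, hy.2.le.trans hc.1.2⟩, hy0⟩).not_gt hy.2

theorem IsFirstZero.unique {r : ℝ → ℝ} {a b : ℝ} (ha : IsFirstZero r a) (hb : IsFirstZero r b) :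
    a = b := by
  by_contra hne
  rcases lt_or_gt_of_ne hne with hlt | hlt
  · exact (hb.2.2 a ha.1.le hlt).ne' ha.2.1
  · exact (ha.2.2 b hb.1.le hlt).ne' hb.2.1

theorem hasDerivAt_one_sub_sq_div_two (x : ℝ) : HasDerivAt (fun s : ℝ => 1 - s ^ 2 / 2) (-x) x :=
  (((hasDerivAt_pow 2 x).div_const 2).const_sub 1).congr_deriv (by ring)

noncomputable def delayPrimitive (Δ : ℝ) (r : ℝ → ℝ) (t : ℝ) : ℝ := ∫ u in (0:ℝ)..t, r (u - Δ)

section DelayPrimitive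

variable {Δ : ℝ} {r : ℝ → ℝ}

theorem hasDerivAt_delayPrimitive (hr : Continuous r) (t : ℝ) :
    HasDerivAt (delayPrimitive Δ r) (r (t - Δ)) t :=
  ((hr.comp (continuous_sub_right Δ)).integral_hasStrictDerivAt 0 t).hasDerivAt

theorem continuous_delayPrimitive (hr : Continuous r) : Continuous (delayPrimitive Δ r) :=
  continuous_iff_continuousAt.2 fun t => (hasDerivAt_delayPrimitive hr t).continuousAt

end DelayPrimitive

namespace IsDelayCosine

variable {Δ θ t : ℝ} {r : ℝ → ℝ}

theorem continuous (h : IsDelayCosine Δ r) : Continuous r := by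
  refine continuous_iff_continuousAt.2 fun t => ?_
  rcases lt_or_ge t 0 with ht | ht
  · refine (continuousAt_const (y := (1:ℝ))).congr ?_
    filter_upwards [Iio_mem_nhds ht] with s hs
    exact (h.1 s hs.le).symm
  · exact (h.2.1 t ht).continuousAt

theorem hasDerivAt (h : IsDelayCosine Δ r) (ht : 0 ≤ t) :
    HasDerivAt r (-delayPrimitive Δ r t) t := by
  have hd := h.2.1 t ht
  rwa [h.2.2 t ht] at hd

theorem delayPrimitive_eq_self (h : IsDelayCosine Δ r) (h0 : 0 ≤ t) (ht : t ≤ Δ) :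
    delayPrimitive Δ r t = t := by
  have hone : delayPrimitive Δ r t = ∫ _ in (0:ℝ)..t, (1:ℝ) :=
    intervalIntegral.integral_congr fun u hu => by
      rw [uIcc_of_le h0] at hu
      exact h.1 _ (by linarith [hu.2])
  simp [hone]

theorem eq_one_sub_sq (h : IsDelayCosine Δ r) (h0 : 0 ≤ t) (ht : t ≤ Δ) : r t = 1 - t ^ 2 / 2 :=
  eq_of_has_deriv_right_eq
    (fun x hx => by
      simpa only [h.delayPrimitive_eq_self hx.1 hx.2.le] using (h.hasDerivAt hx.1).hasDerivWithinAt)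
    (fun x _ => (hasDerivAt_one_sub_sq_div_two x).hasDerivWithinAt)
    h.continuous.continuousOn (by fun_prop) (by simp [h.1 0 le_rfl]) t ⟨h0, ht⟩

theorem pos_of_lt (h : IsDelayCosine Δ r) (hz : IsFirstZero r θ) (ht : t < θ) : 0 < r t := by
  rcases le_or_gt t 0 with h0 | h0
  · rw [h.1 t h0]
    exact one_pos
  · exact hz.2.2 t h0.le ht

theorem nonneg_of_le (h : IsDelayCosine Δ r) (hz : IsFirstZero r θ) (ht : t ≤ θ) : 0 ≤ r t := by
  rcases ht.lt_or_eq with hlt | rfl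
  · exact (h.pos_of_lt hz hlt).le
  · exact hz.2.1.ge

theorem delayPrimitive_pos (h : IsDelayCosine Δ r) (hz : IsFirstZero r θ) (hΔ : 0 ≤ Δ)
    (h0 : 0 < t) (ht : t ≤ θ) : 0 < delayPrimitive Δ r t :=
  intervalIntegral.intervalIntegral_pos_of_pos_on
    ((h.continuous.comp (continuous_sub_right Δ)).intervalIntegrable _ _)
    (fun u hu => h.pos_of_lt hz (by linarith [hu.2])) h0

theorem strictAntiOn (h : IsDelayCosine Δ r) (hz : IsFirstZero r θ) (hΔ : 0 ≤ Δ) :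
    StrictAntiOn r (Icc 0 θ) := by
  refine strictAntiOn_of_hasDerivWithinAt_neg (f' := fun x => -delayPrimitive Δ r x)
    (convex_Icc 0 θ) h.continuous.continuousOn
    (fun x hx => ?_) (fun x hx => ?_) <;> rw [interior_Icc] at hx
  · exact (h.hasDerivAt hx.1.le).hasDerivWithinAt
  · exact neg_neg_of_pos (h.delayPrimitive_pos hz hΔ hx.1 hx.2.le)

theorem antitoneOn (h : IsDelayCosine Δ r) (hz : IsFirstZero r θ) (hΔ : 0 ≤ Δ) :
    AntitoneOn r (Iic θ) := by
  have hle_one : ∀ t ∈ Icc 0 θ, r t ≤ 1 := fun t ht =>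
    h.1 0 le_rfl ▸ (h.strictAntiOn hz hΔ).antitoneOn ⟨le_rfl, hz.1.le⟩ ht ht.1
  intro a ha b hb hab
  rcases le_total b 0 with hb0 | hb0
  · rw [h.1 a (hab.trans hb0), h.1 b hb0]
  rcases le_total a 0 with ha0 | ha0
  · rw [h.1 a ha0]
    exact hle_one b ⟨hb0, hb⟩
  · exact (h.strictAntiOn hz hΔ).antitoneOn ⟨ha0, ha⟩ ⟨hb0, hb⟩ hab

theorem le_one (h : IsDelayCosine Δ r) (hz : IsFirstZero r θ) (hΔ : 0 ≤ Δ) (ht : t ≤ θ) :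
    r t ≤ 1 :=
  h.1 _ (min_le_right t 0) ▸
    h.antitoneOn hz hΔ ((min_le_left t 0).trans ht : min t 0 ≤ θ) ht (min_le_left t 0)

theorem lt_one (h : IsDelayCosine Δ r) (hz : IsFirstZero r θ) (hΔ : 0 ≤ Δ) (h0 : 0 < t)
    (ht : t ≤ θ) : r t < 1 :=
  h.1 0 le_rfl ▸ h.strictAntiOn hz hΔ ⟨le_rfl, hz.1.le⟩ ⟨h0.le, ht⟩ h0

theorem delayPrimitive_le_self (h : IsDelayCosine Δ r) (hz : IsFirstZero r θ) (hΔ : 0 ≤ Δ)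
    (h0 : 0 ≤ t) (ht : t ≤ θ) : delayPrimitive Δ r t ≤ t := by
  have hle := intervalIntegral.integral_mono_on (μ := volume) h0
    ((h.continuous.comp (continuous_sub_right Δ)).intervalIntegrable _ _)
    (continuous_const.intervalIntegrable _ _)
    (fun u hu => h.le_one hz hΔ (by linarith [hu.2] : u - Δ ≤ θ))
  simpa [delayPrimitive] using hle

theorem one_sub_sq_le (h : IsDelayCosine Δ r) (hz : IsFirstZero r θ) (hΔ : 0 ≤ Δ)
    (h0 : 0 ≤ t) (ht : t ≤ θ) : 1 - t ^ 2 / 2 ≤ r t := by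
  have hmono : MonotoneOn (fun s => r s - (1 - s ^ 2 / 2)) (Icc 0 θ) := by
    refine monotoneOn_of_hasDerivWithinAt_nonneg (f' := fun x => -delayPrimitive Δ r x - -x)
      (convex_Icc 0 θ)
      (h.continuous.continuousOn.sub (by fun_prop)) (fun x hx => ?_) (fun x hx => ?_) <;>
      rw [interior_Icc] at hx
    · exact ((h.hasDerivAt hx.1.le).sub (hasDerivAt_one_sub_sq_div_two x)).hasDerivWithinAt
    · linarith [h.delayPrimitive_le_self hz hΔ hx.1.le hx.2.le]
  have h0t := hmono ⟨le_rfl, hz.1.le⟩ ⟨h0, ht⟩ h0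
  simp only [h.1 0 le_rfl] at h0t
  linarith

theorem sqrt_two_le_firstZero (h : IsDelayCosine Δ r) (hz : IsFirstZero r θ) (hΔ : 0 ≤ Δ) :
    √2 ≤ θ := by
  have hθ := h.one_sub_sq_le hz hΔ hz.1.le le_rfl
  rw [hz.2.1] at hθ
  exact (sqrt_le_left hz.1.le).2 (by linarith)

theorem isFirstZero_sqrt_two (h : IsDelayCosine Δ r) (hΔ : √2 ≤ Δ) : IsFirstZero r √2 := by
  refine ⟨by positivity, ?_, fun t h0 ht => ?_⟩
  · rw [h.eq_one_sub_sq (sqrt_nonneg 2) hΔ, sq_sqrt zero_le_two]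
    norm_num
  · rw [h.eq_one_sub_sq h0 (ht.le.trans hΔ)]
    linarith [(lt_sqrt h0).1 ht]

theorem eqOn_cos (h : IsDelayCosine 0 r) : EqOn r cos (Ici 0) := by
  intro t ht
  have hrot : ∀ _ : ℝ, LipschitzWith 1 (fun p : ℝ × ℝ => (p.2, -p.1)) := fun _ => by
    simpa using LipschitzWith.prod_snd.prodMk LipschitzWith.prod_fst.neg
  have hsol : EqOn (fun s => (r s, -delayPrimitive 0 r s)) (fun s => (cos s, -sin s)) (Icc 0 t) := by
    refine ODE_solution_unique hrot
      (h.continuous.prodMk (continuous_delayPrimitive h.continuous).neg).continuousOn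
      (fun s hs => ?_) (by fun_prop) (fun s _ => ?_) (by simp [h.1 0 le_rfl, delayPrimitive])
    · have hP := (hasDerivAt_delayPrimitive (Δ := 0) h.continuous s).neg
      rw [sub_zero] at hP
      exact ((h.hasDerivAt hs.1).prodMk hP).hasDerivWithinAt
    · exact ((hasDerivAt_cos s).prodMk (hasDerivAt_sin s).neg).hasDerivWithinAt
  exact congrArg Prod.fst (hsol ⟨ht, le_rfl⟩)

theorem isFirstZero_pi_div_two (h : IsDelayCosine 0 r) : IsFirstZero r (π / 2) := by
  refine ⟨by positivity, ?_, fun t h0 ht => ?_⟩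
  · rw [h.eqOn_cos (by positivity : (0:ℝ) ≤ π / 2), cos_pi_div_two]
  · rw [h.eqOn_cos h0]
    exact cos_pos_of_mem_Ioo ⟨by linarith [pi_pos], ht⟩

end IsDelayCosine

/-- With `r' = -delayPrimitive Δ r`, this is the Wronskian `r₂' r₁ - r₁' r₂`. -/
noncomputable def wronskian (Δ₁ : ℝ) (r₁ : ℝ → ℝ) (Δ₂ : ℝ) (r₂ : ℝ → ℝ) (t : ℝ) : ℝ :=
  delayPrimitive Δ₁ r₁ t * r₂ t - delayPrimitive Δ₂ r₂ t * r₁ t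

section Wronskian

variable {Δ₁ Δ₂ θ₁ θ₂ s t : ℝ} {r₁ r₂ : ℝ → ℝ}

theorem wronskian_zero : wronskian Δ₁ r₁ Δ₂ r₂ 0 = 0 := by
  simp [wronskian, delayPrimitive]

theorem continuous_wronskian (h1 : IsDelayCosine Δ₁ r₁) (h2 : IsDelayCosine Δ₂ r₂) :
    Continuous (wronskian Δ₁ r₁ Δ₂ r₂) :=
  ((continuous_delayPrimitive h1.continuous).mul h2.continuous).sub
    ((continuous_delayPrimitive h2.continuous).mul h1.continuous)

theorem hasDerivAt_wronskian (h1 : IsDelayCosine Δ₁ r₁) (h2 : IsDelayCosine Δ₂ r₂) (ht : 0 ≤ t) :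
    HasDerivAt (wronskian Δ₁ r₁ Δ₂ r₂) (r₁ (t - Δ₁) * r₂ t - r₂ (t - Δ₂) * r₁ t) t :=
  (((hasDerivAt_delayPrimitive h1.continuous t).mul (h2.hasDerivAt ht)).sub
    ((hasDerivAt_delayPrimitive h2.continuous t).mul (h1.hasDerivAt ht))).congr_deriv (by ring)

theorem hasDerivAt_div (h1 : IsDelayCosine Δ₁ r₁) (h2 : IsDelayCosine Δ₂ r₂) (ht : 0 ≤ t)
    (hr : r₁ t ≠ 0) :
    HasDerivAt (fun s => r₂ s / r₁ s) (wronskian Δ₁ r₁ Δ₂ r₂ t / r₁ t ^ 2) t :=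
  ((h2.hasDerivAt ht).div (h1.hasDerivAt ht) hr).congr_deriv (by rw [wronskian]; ring)

theorem antitoneOn_div (h1 : IsDelayCosine Δ₁ r₁) (h2 : IsDelayCosine Δ₂ r₂)
    (hz1 : IsFirstZero r₁ θ₁) (hs : s < θ₁) (hW : ∀ t ∈ Ioo 0 s, wronskian Δ₁ r₁ Δ₂ r₂ t ≤ 0) :
    AntitoneOn (fun t => r₂ t / r₁ t) (Icc 0 s) := by
  have hpos : ∀ x ∈ Icc 0 s, 0 < r₁ x := fun x hx => h1.pos_of_lt hz1 (hx.2.trans_lt hs)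
  refine antitoneOn_of_hasDerivWithinAt_nonpos
    (f' := fun x => wronskian Δ₁ r₁ Δ₂ r₂ x / r₁ x ^ 2) (convex_Icc 0 s)
    (h2.continuous.continuousOn.div h1.continuous.continuousOn fun x hx => (hpos x hx).ne')
    (fun x hx => ?_) (fun x hx => ?_) <;> rw [interior_Icc] at hx
  · exact (hasDerivAt_div h1 h2 hx.1.le (hpos x (Ioo_subset_Icc_self hx)).ne').hasDerivWithinAt
  · exact div_nonpos_of_nonpos_of_nonneg (hW x hx) (sq_nonneg _)

theorem wronskian_nonpos_and_neg (hΔ₁ : 0 ≤ Δ₁) (h12 : Δ₁ < Δ₂) (hΔ₂ : Δ₂ ≤ √2)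
    (h1 : IsDelayCosine Δ₁ r₁) (h2 : IsDelayCosine Δ₂ r₂) (hz1 : IsFirstZero r₁ θ₁) :
    (∀ t ∈ Icc 0 Δ₂, wronskian Δ₁ r₁ Δ₂ r₂ t ≤ 0) ∧ wronskian Δ₁ r₁ Δ₂ r₂ Δ₂ < 0 := by
  have hderiv : ∀ t ∈ Ioo 0 Δ₂, 0 < r₂ t ∧
      r₁ (t - Δ₁) * r₂ t - r₂ (t - Δ₂) * r₁ t ≤ (r₁ (t - Δ₁) - 1) * r₂ t := by
    intro t ht
    have hr₂ : r₂ t = 1 - t ^ 2 / 2 := h2.eq_one_sub_sq ht.1.le ht.2.le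
    have hr₁ : 1 - t ^ 2 / 2 ≤ r₁ t :=
      h1.one_sub_sq_le hz1 hΔ₁ ht.1.le (ht.2.le.trans (hΔ₂.trans (h1.sqrt_two_le_firstZero hz1 hΔ₁)))
    have ht2 : t ^ 2 < 2 := (lt_sqrt ht.1.le).1 (ht.2.trans_le hΔ₂)
    rw [h2.1 (t - Δ₂) (by linarith [ht.2])]
    constructor <;> nlinarith
  have hθ₁ : Δ₂ ≤ θ₁ := hΔ₂.trans (h1.sqrt_two_le_firstZero hz1 hΔ₁)
  have hanti : AntitoneOn (wronskian Δ₁ r₁ Δ₂ r₂) (Icc 0 Δ₂) := by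
    refine antitoneOn_of_hasDerivWithinAt_nonpos
      (f' := fun x => r₁ (x - Δ₁) * r₂ x - r₂ (x - Δ₂) * r₁ x) (convex_Icc 0 Δ₂)
      (continuous_wronskian h1 h2).continuousOn (fun x hx => ?_) (fun x hx => ?_) <;>
      rw [interior_Icc] at hx
    · exact (hasDerivAt_wronskian h1 h2 hx.1.le).hasDerivWithinAt
    · obtain ⟨hr₂, hle⟩ := hderiv x hx
      nlinarith [h1.le_one hz1 hΔ₁ (by linarith [hx.2] : x - Δ₁ ≤ θ₁)]
  have hstrict : StrictAntiOn (wronskian Δ₁ r₁ Δ₂ r₂) (Icc Δ₁ Δ₂) := by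
    refine strictAntiOn_of_hasDerivWithinAt_neg
      (f' := fun x => r₁ (x - Δ₁) * r₂ x - r₂ (x - Δ₂) * r₁ x) (convex_Icc Δ₁ Δ₂)
      (continuous_wronskian h1 h2).continuousOn (fun x hx => ?_) (fun x hx => ?_) <;>
      rw [interior_Icc] at hx
    · exact (hasDerivAt_wronskian h1 h2 (hΔ₁.trans hx.1.le)).hasDerivWithinAt
    · obtain ⟨hr₂, hle⟩ := hderiv x ⟨hΔ₁.trans_lt hx.1, hx.2⟩
      nlinarith [h1.lt_one hz1 hΔ₁ (by linarith [hx.1] : 0 < x - Δ₁) (by linarith [hx.2])]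
  have hnonpos : ∀ t ∈ Icc 0 Δ₂, wronskian Δ₁ r₁ Δ₂ r₂ t ≤ 0 := fun t ht =>
    wronskian_zero (Δ₁ := Δ₁) ▸ hanti ⟨le_rfl, hΔ₁.trans h12.le⟩ ht ht.1
  exact ⟨hnonpos, (hstrict ⟨le_rfl, h12.le⟩ ⟨h12.le, le_rfl⟩ h12).trans_le
    (hnonpos Δ₁ ⟨hΔ₁, h12.le⟩)⟩

theorem deriv_wronskian_nonpos (hΔ₁ : 0 ≤ Δ₁) (h12 : Δ₁ ≤ Δ₂)
    (h1 : IsDelayCosine Δ₁ r₁) (h2 : IsDelayCosine Δ₂ r₂)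
    (hz1 : IsFirstZero r₁ θ₁) (hz2 : IsFirstZero r₂ θ₂)
    (hs : Δ₂ ≤ s) (hs₁ : s < θ₁) (hs₂ : s ≤ θ₂)
    (hW : ∀ t ∈ Ioo 0 s, wronskian Δ₁ r₁ Δ₂ r₂ t ≤ 0) :
    r₁ (s - Δ₁) * r₂ s - r₂ (s - Δ₂) * r₁ s ≤ 0 := by
  have hs₀ : 0 ≤ s - Δ₂ := sub_nonneg.2 hs
  have hratio : r₂ s / r₁ s ≤ r₂ (s - Δ₂) / r₁ (s - Δ₂) :=
    antitoneOn_div h1 h2 hz1 hs₁ hW ⟨hs₀, by linarith⟩ ⟨by linarith, le_rfl⟩ (by linarith)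
  rw [div_le_div_iff₀ (h1.pos_of_lt hz1 hs₁) (h1.pos_of_lt hz1 (by linarith))] at hratio
  have hmono : r₁ (s - Δ₁) ≤ r₁ (s - Δ₂) :=
    h1.antitoneOn hz1 hΔ₁ (by simp only [mem_Iic]; linarith) (by simp only [mem_Iic]; linarith)
      (by linarith)
  nlinarith [h2.nonneg_of_le hz2 hs₂]

theorem firstZero_lt_of_lt (hΔ₁ : 0 ≤ Δ₁) (h12 : Δ₁ < Δ₂) (hΔ₂ : Δ₂ ≤ √2)
    (h1 : IsDelayCosine Δ₁ r₁) (h2 : IsDelayCosine Δ₂ r₂)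
    (hz1 : IsFirstZero r₁ θ₁) (hz2 : IsFirstZero r₂ θ₂) : θ₂ < θ₁ := by
  by_contra! hθ
  set W := wronskian Δ₁ r₁ Δ₂ r₂
  obtain ⟨hearly, hWΔ₂⟩ := wronskian_nonpos_and_neg hΔ₁ h12 hΔ₂ h1 h2 hz1
  have hneg : ∀ s ∈ Icc Δ₂ θ₁, W s < 0 := by
    refine (continuous_wronskian h1 h2).continuousOn.forall_neg_of_forall_Ico_neg
      fun s hs hW => ?_
    have hnonpos : ∀ t ∈ Ioo 0 s, W t ≤ 0 := fun t ht => by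
      rcases le_or_gt t Δ₂ with htΔ | htΔ
      · exact hearly t ⟨ht.1.le, htΔ⟩
      · exact (hW t ⟨htΔ.le, ht.2⟩).le
    have hanti : AntitoneOn W (Icc Δ₂ s) := by
      refine antitoneOn_of_hasDerivWithinAt_nonpos (convex_Icc Δ₂ s)
        (f' := fun x => r₁ (x - Δ₁) * r₂ x - r₂ (x - Δ₂) * r₁ x) (continuous_wronskian h1 h2).continuousOn (fun x hx => ?_) (fun x hx => ?_) <;>
        rw [interior_Icc] at hx
      · exact (hasDerivAt_wronskian h1 h2 (hΔ₁.trans (h12.le.trans hx.1.le))).hasDerivWithinAt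
      · exact deriv_wronskian_nonpos hΔ₁ h12.le h1 h2 hz1 hz2 hx.1.le (hx.2.trans_le hs.2)
          (by linarith [hx.2, hs.2]) fun t ht => hnonpos t ⟨ht.1, ht.2.trans hx.2⟩
    exact (hanti ⟨le_rfl, hs.1⟩ ⟨hs.1, le_rfl⟩ hs.1).trans_lt hWΔ₂
  have hWθ₁ := hneg θ₁ ⟨hΔ₂.trans (h1.sqrt_two_le_firstZero hz1 hΔ₁), le_rfl⟩
  simp only [W, wronskian, hz1.2.1, mul_zero, sub_zero] at hWθ₁
  exact hWθ₁.not_ge (mul_nonneg (h1.delayPrimitive_pos hz1 hΔ₁ hz1.1 le_rfl).le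
    (h2.nonneg_of_le hz2 hθ))

end Wronskian

/-- monotonicity of `Δ ↦ θ_Δ`. -/
theorem theta_monotonicity
    (r : ℝ → ℝ → ℝ) (θ : ℝ → ℝ)
    (hr : ∀ Δ, 0 ≤ Δ → IsDelayCosine Δ (r Δ))
    (hθ : ∀ Δ, 0 ≤ Δ → IsFirstZero (r Δ) (θ Δ)) :
    AntitoneOn θ (Set.Ici 0) ∧
    θ 0 = Real.pi / 2 ∧
    (∀ Δ, Real.sqrt 2 ≤ Δ → θ Δ = Real.sqrt 2) ∧
    StrictAntiOn θ (Set.Icc 0 (Real.sqrt 2)) := by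
  have hbig : ∀ Δ, √2 ≤ Δ → θ Δ = √2 := fun Δ hΔ =>
    have h0 : 0 ≤ Δ := (sqrt_nonneg 2).trans hΔ
    (hθ Δ h0).unique ((hr Δ h0).isFirstZero_sqrt_two hΔ)
  have hlt : ∀ a b, 0 ≤ a → a < b → b ≤ √2 → θ b < θ a := fun a b ha hab hb =>
    firstZero_lt_of_lt ha hab hb (hr a ha) (hr b (ha.trans hab.le)) (hθ a ha)
      (hθ b (ha.trans hab.le))
  refine ⟨fun a ha b hb hab => ?_, (hθ 0 le_rfl).unique (hr 0 le_rfl).isFirstZero_pi_div_two,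
    hbig, fun a ha b hb hab => hlt a b ha.1 hab hb.2⟩
  rcases hab.eq_or_lt with rfl | hab
  · exact le_rfl
  rcases le_or_gt b √2 with hb2 | hb2
  · exact (hlt a b ha hab hb2).le
  · rw [hbig b hb2.le]
    exact (hr a ha).sqrt_two_le_firstZero (hθ a ha) ha
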